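/- arXiv:2109.03119 — 4 statements merged into one kernel-verified Lean document; each statement's English description precedes it below -/
import Mathlib

section
/- Let r ≥ 1 and β > 0 with rβ > 3/2, A ∈ ℝ^{m×n}, z ∈ ℝ^m and ϑ ∈ (0,∞)^n. Then the objective function F(u,θ) is convex on the convex set ℝ^n × (0,∞)^n = {(u,θ) : θ_j > 0 for all j}. -/
/-!
Every summand of `F` is convex on `ℝⁿ × (0, ∞)ⁿ`: the misfit is a convex quadratic in `u`,
`u_j² / θ_j` is the perspective of the square, `log` is concave and enters with the nonpositive
weight `-(rβ - 3/2)`, and `t ↦ t ^ r` is convex for `r ≥ 1`. Each is a one- or two-variable convex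
function precomposed with a linear map.
-/

open Real Set

section FinsetSum

variable {𝕜 E β ι : Type*} [Semiring 𝕜] [PartialOrder 𝕜] [AddCommMonoid E] [SMul 𝕜 E]
  [AddCommMonoid β] [PartialOrder β] [IsOrderedAddMonoid β] [Module 𝕜 β] {s : Set E}

theorem convexOn_finset_sum (hs : Convex 𝕜 s) (t : Finset ι) {f : ι → E → β}
    (hf : ∀ i ∈ t, ConvexOn 𝕜 s (f i)) : ConvexOn 𝕜 s fun x => ∑ i ∈ t, f i x := by
  classical
  induction t using Finset.induction_on with
  | empty => simpa using convexOn_const (0 : β) hs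
  | insert a t ha ih =>
    simp only [Finset.sum_insert ha]
    exact (hf a (t.mem_insert_self a)).add (ih fun i hi => hf i (Finset.mem_insert_of_mem hi))

theorem concaveOn_finset_sum (hs : Convex 𝕜 s) (t : Finset ι) {f : ι → E → β}
    (hf : ∀ i ∈ t, ConcaveOn 𝕜 s (f i)) : ConcaveOn 𝕜 s fun x => ∑ i ∈ t, f i x :=
  convexOn_finset_sum (β := βᵒᵈ) hs t hf

end FinsetSum

section DivConst

variable {𝕜 β : Type*} [Field 𝕜] [PartialOrder 𝕜] [AddCommMonoid β] [PartialOrder β] [SMul 𝕜 β]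
  {s : Set 𝕜} {f : 𝕜 → β}

theorem ConvexOn.comp_div_const (hf : ConvexOn 𝕜 s f) (c : 𝕜) :
    ConvexOn 𝕜 ((· / c) ⁻¹' s) fun t => f (t / c) := by
  simp only [div_eq_mul_inv]
  exact hf.comp_linearMap (LinearMap.mulRight 𝕜 c⁻¹)

theorem ConcaveOn.comp_div_const (hf : ConcaveOn 𝕜 s f) (c : 𝕜) :
    ConcaveOn 𝕜 ((· / c) ⁻¹' s) fun t => f (t / c) :=
  hf.dual.comp_div_const c

end DivConst

theorem convexOn_sq_sub_linear {𝕜 E : Type*} [Field 𝕜] [LinearOrder 𝕜] [IsStrictOrderedRing 𝕜]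
    [AddCommGroup E] [Module 𝕜 E] (ℓ : E →ₗ[𝕜] 𝕜) (c : 𝕜) :
    ConvexOn 𝕜 univ fun x => (ℓ x - c) ^ 2 := by
  simpa only [preimage_univ, Function.comp_def, Pi.sub_apply, Function.const_apply,
    AffineMap.coe_sub, AffineMap.coe_const, LinearMap.coe_toAffineMap] using
    (Even.convexOn_pow even_two).comp_affineMap (ℓ.toAffineMap - AffineMap.const 𝕜 E c)

theorem convexOn_sq_div {𝕜 : Type*} [Field 𝕜] [LinearOrder 𝕜] [IsStrictOrderedRing 𝕜] :
    ConvexOn 𝕜 (univ ×ˢ Ioi 0) fun q : 𝕜 × 𝕜 => q.1 ^ 2 / q.2 := by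
  refine ⟨convex_univ.prod (convex_Ioi 0), ?_⟩
  rintro ⟨x, s⟩ ⟨-, hs : 0 < s⟩ ⟨y, t⟩ ⟨-, ht : 0 < t⟩ a b ha hb hab
  have hc : 0 < a * s + b * t := convex_Ioi 0 hs ht ha hb hab
  have gap : (a * (x ^ 2 / s) + b * (y ^ 2 / t)) * (a * s + b * t) - (a * x + b * y) ^ 2
      = a * b * (x * t - y * s) ^ 2 / (s * t) := by
    field_simp
    ring
  have gap_nonneg : 0 ≤ a * b * (x * t - y * s) ^ 2 / (s * t) := by positivity
  simp only [Prod.smul_mk, Prod.mk_add_mk, smul_eq_mul]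
  rw [div_le_iff₀ hc]
  linarith

theorem ias_objective_convexOn_general {n m : ℕ} (r β : ℝ) (hr : 1 ≤ r)
    (hrβ : 3 / 2 < r * β) (A : Matrix (Fin m) (Fin n) ℝ) (z : Fin m → ℝ)
    (ϑ : Fin n → ℝ) (hϑ : ∀ j, 0 < ϑ j) :
    ConvexOn ℝ {p : (Fin n → ℝ) × (Fin n → ℝ) | ∀ j, 0 < p.2 j}
      (fun p : (Fin n → ℝ) × (Fin n → ℝ) =>
        (1 / 2) * ∑ i, (A.mulVec p.1 i - z i) ^ 2
          + (1 / 2) * ∑ j, (p.1 j) ^ 2 / p.2 j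
          - (r * β - 3 / 2) * ∑ j, Real.log (p.2 j / ϑ j)
          + ∑ j, (p.2 j / ϑ j) ^ r) := by
  set S := {p : (Fin n → ℝ) × (Fin n → ℝ) | ∀ j, 0 < p.2 j}
  have hS : Convex ℝ S := fun p hp q hq a b ha hb hab j =>
    convex_Ioi (0 : ℝ) (hp j) (hq j) ha hb hab
  let θ (j : Fin n) : (Fin n → ℝ) × (Fin n → ℝ) →ₗ[ℝ] ℝ := LinearMap.proj j ∘ₗ LinearMap.snd ℝ _ _
  let uθ (j : Fin n) : (Fin n → ℝ) × (Fin n → ℝ) →ₗ[ℝ] ℝ × ℝ :=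
    (LinearMap.proj j).prodMap (LinearMap.proj j)
  have misfit (i : Fin m) : ConvexOn ℝ S fun p => (A.mulVec p.1 i - z i) ^ 2 :=
    (convexOn_sq_sub_linear (LinearMap.proj i ∘ₗ A.mulVecLin ∘ₗ LinearMap.fst ℝ _ _) (z i)).subset
      (subset_univ S) hS
  have quad (j : Fin n) : ConvexOn ℝ S fun p => p.1 j ^ 2 / p.2 j :=
    ((convexOn_sq_div (𝕜 := ℝ)).comp_linearMap (uθ j)).subset
      (fun p (hp : p ∈ S) => mem_prod.2 ⟨mem_univ _, hp j⟩) hS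
  have logs (j : Fin n) : ConcaveOn ℝ S fun p => log (p.2 j / ϑ j) :=
    ((strictConcaveOn_log_Ioi.concaveOn.comp_div_const (ϑ j)).comp_linearMap (θ j)).subset
      (fun p (hp : p ∈ S) => div_pos (hp j) (hϑ j)) hS
  have pows (j : Fin n) : ConvexOn ℝ S fun p => (p.2 j / ϑ j) ^ r :=
    (((convexOn_rpow hr).comp_div_const (ϑ j)).comp_linearMap (θ j)).subset
      (fun p (hp : p ∈ S) => (div_pos (hp j) (hϑ j)).le) hS
  exact ((((convexOn_finset_sum hS _ fun i _ => misfit i).smul (by norm_num)).add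
    ((convexOn_finset_sum hS _ fun j _ => quad j).smul (by norm_num))).sub
    ((concaveOn_finset_sum hS _ fun j _ => logs j).smul (by linarith))).add
    (convexOn_finset_sum hS _ fun j _ => pows j)

/-- For `r ≥ 1`, `β > 0` with `r * β > 3/2`, the IAS objective `F(u, θ)` is convex on
the convex set `ℝⁿ × (0, ∞)ⁿ`. -/
theorem ias_objective_convexOn {n m : ℕ} (r β : ℝ) (hr : 1 ≤ r) (hβ : 0 < β)
    (hrβ : 3 / 2 < r * β) (A : Matrix (Fin m) (Fin n) ℝ) (z : Fin m → ℝ)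
    (ϑ : Fin n → ℝ) (hϑ : ∀ j, 0 < ϑ j) :
    ConvexOn ℝ {p : (Fin n → ℝ) × (Fin n → ℝ) | ∀ j, 0 < p.2 j}
      (fun p : (Fin n → ℝ) × (Fin n → ℝ) =>
        (1 / 2) * ∑ i, (A.mulVec p.1 i - z i) ^ 2
          + (1 / 2) * ∑ j, (p.1 j) ^ 2 / p.2 j
          - (r * β - 3 / 2) * ∑ j, Real.log (p.2 j / ϑ j)
          + ∑ j, (p.2 j / ϑ j) ^ r) :=
  ias_objective_convexOn_general r β hr hrβ A z ϑ hϑ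
end

section
/- Let 0 < r < 1, β > 0 with rβ > 3/2, set η = rβ − 3/2, and let ϑ > 0. Then the single-component objective φ(u,θ) = u²/(2θ) − η log(θ/ϑ) + (θ/ϑ)^r is convex on the convex region {(u,θ) ∈ ℝ × ℝ : 0 < θ ≤ ϑ (η/(r(1−r)))^{1/r}}. -/
open Real Set Filter

/-- Quadratic-over-linear is jointly convex on the half-plane `θ > 0`,
restricted to any convex subset. -/
lemma ias_quad_over_lin_convexOn {S : Set (ℝ × ℝ)} (hS : Convex ℝ S)
    (hSpos : ∀ p ∈ S, 0 < p.2) :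
    ConvexOn ℝ S (fun p : ℝ × ℝ => p.1 ^ 2 / (2 * p.2)) := by
  refine ⟨hS, ?_⟩
  rintro ⟨u1, t1⟩ hp1 ⟨u2, t2⟩ hp2 a b ha hb hab
  have ht1 : 0 < t1 := hSpos _ hp1
  have ht2 : 0 < t2 := hSpos _ hp2
  have hpos : 0 < a * t1 + b * t2 := by
    rcases eq_or_lt_of_le ha with h | h
    · have hb1 : b = 1 := by linarith
      simpa [← h, hb1] using ht2
    · have := mul_pos h ht1
      nlinarith [mul_nonneg hb ht2.le]
  simp only [Prod.smul_mk, Prod.mk_add_mk, smul_eq_mul]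
  have key : (a * u1 + b * u2) ^ 2 * (t1 * t2) ≤
      (a * u1 ^ 2 * t2 + b * u2 ^ 2 * t1) * (a * t1 + b * t2) := by
    nlinarith [mul_nonneg (mul_nonneg ha hb) (sq_nonneg (u1 * t2 - u2 * t1)),
      sq_nonneg (u1 * t2 - u2 * t1)]
  have e1 : a * (u1 ^ 2 / (2 * t1)) + b * (u2 ^ 2 / (2 * t2)) =
      (a * u1 ^ 2 * t2 + b * u2 ^ 2 * t1) / (2 * (t1 * t2)) := by
    field_simp
  rw [div_le_iff₀ (by positivity), e1, div_mul_eq_mul_div, le_div_iff₀ (by positivity)]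
  nlinarith [key]

/-- For `0 < r < 1`, `β > 0` with `r * β > 3/2` and `η = r * β - 3/2`, the
single-component IAS objective `φ(u, θ) = u²/(2θ) - η log(θ/ϑ) + (θ/ϑ)^r` is convex on
the region `{(u, θ) : 0 < θ ≤ ϑ (η/(r(1-r)))^(1/r)}`. -/
theorem ias_single_component_convexOn_of_pos (r β ϑ η : ℝ) (hr0 : 0 < r) (hr1 : r < 1)
    (hβ : 0 < β) (hrβ : 3 / 2 < r * β) (hη : η = r * β - 3 / 2) (hϑ : 0 < ϑ) :
    ConvexOn ℝ {p : ℝ × ℝ | 0 < p.2 ∧ p.2 ≤ ϑ * (η / (r * (1 - r))) ^ (1 / r)}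
      (fun p : ℝ × ℝ =>
        p.1 ^ 2 / (2 * p.2) - η * Real.log (p.2 / ϑ) + (p.2 / ϑ) ^ r) := by
  have hη0 : 0 < η := by rw [hη]; linarith
  have hr1' : 0 < 1 - r := by linarith
  have hbase : 0 < η / (r * (1 - r)) := by positivity
  set c : ℝ := (η / (r * (1 - r))) ^ (1 / r) with hc
  have hc0 : 0 < c := rpow_pos_of_pos hbase _
  set M : ℝ := ϑ * c with hMdef
  have hM0 : 0 < M := by positivity
  -- the set
  set S : Set (ℝ × ℝ) := {p : ℝ × ℝ | 0 < p.2 ∧ p.2 ≤ M} with hSdef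
  have hSpre : S = (LinearMap.snd ℝ ℝ ℝ) ⁻¹' (Ioc 0 M) := by
    ext p; simp [hSdef, Ioc]
  have hSconv : Convex ℝ S := by
    rw [hSpre]
    exact (convex_Ioc 0 M).linear_preimage _
  -- part 1 : quadratic over linear
  have h1 : ConvexOn ℝ S (fun p : ℝ × ℝ => p.1 ^ 2 / (2 * p.2)) :=
    ias_quad_over_lin_convexOn hSconv (fun p hp => hp.1)
  -- part 2 : the θ-part
  set g : ℝ → ℝ := fun x => -(η * Real.log (x / ϑ)) + (x / ϑ) ^ r with hg
  set g1 : ℝ → ℝ := fun x => -η / x + r * (x / ϑ) ^ (r - 1) / ϑ with hg1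
  set g2 : ℝ → ℝ := fun x => η / x ^ 2 + r * (r - 1) * (x / ϑ) ^ (r - 2) / ϑ ^ 2 with hg2
  have hd1 : ∀ x ∈ Ioi (0 : ℝ), HasDerivAt g (g1 x) x := by
    intro x hx
    have hx0 : (0 : ℝ) < x := hx
    have hdiv : HasDerivAt (fun t : ℝ => t / ϑ) (1 / ϑ) x := by
      simpa using (hasDerivAt_id x).div_const ϑ
    have hlog : HasDerivAt (fun t : ℝ => Real.log (t / ϑ)) ((x / ϑ)⁻¹ * (1 / ϑ)) x :=
      (Real.hasDerivAt_log (by positivity)).comp x hdiv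
    have hrpow : HasDerivAt (fun t : ℝ => (t / ϑ) ^ r)
        (r * (x / ϑ) ^ (r - 1) * (1 / ϑ)) x :=
      (Real.hasDerivAt_rpow_const (p := r) (Or.inl (by positivity))).comp x hdiv
    have := (hlog.const_mul η).neg.add hrpow
    refine this.congr_deriv ?_
    simp only [hg1]
    field_simp
  have hd2 : ∀ x ∈ Ioi (0 : ℝ), HasDerivAt g1 (g2 x) x := by
    intro x hx
    have hx0 : (0 : ℝ) < x := hx
    have hdiv : HasDerivAt (fun t : ℝ => t / ϑ) (1 / ϑ) x := by
      simpa using (hasDerivAt_id x).div_const ϑ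
    have hinv : HasDerivAt (fun t : ℝ => -η / t) (η / x ^ 2) x := by
      have h := (hasDerivAt_inv hx0.ne').const_mul (-η)
      have he : (fun t : ℝ => -η * t⁻¹) = fun t : ℝ => -η / t := by
        funext t; rw [div_eq_mul_inv]
      rw [he] at h
      refine h.congr_deriv ?_
      ring
    have hrpow : HasDerivAt (fun t : ℝ => (t / ϑ) ^ (r - 1))
        ((r - 1) * (x / ϑ) ^ (r - 1 - 1) * (1 / ϑ)) x :=
      (Real.hasDerivAt_rpow_const (p := r - 1) (Or.inl (by positivity))).comp x hdiv
    have := hinv.add (((hrpow.const_mul r).div_const ϑ))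
    refine this.congr_deriv ?_
    simp only [hg2]
    have : r - 1 - 1 = r - 2 := by ring
    rw [this]
    field_simp
  have hderiv_eq : ∀ x ∈ Ioi (0 : ℝ), deriv g x = g1 x := fun x hx => (hd1 x hx).deriv
  have hg_conv : ConvexOn ℝ (Ioc 0 M) g := by
    apply convexOn_of_deriv2_nonneg (convex_Ioc 0 M)
    · intro x hx
      exact (hd1 x hx.1).continuousAt.continuousWithinAt
    · rw [interior_Ioc]
      intro x hx
      exact ((hd1 x hx.1).differentiableAt).differentiableWithinAt
    · rw [interior_Ioc]
      intro x hx
      have : deriv g =ᶠ[nhds x] g1 :=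
        eventually_of_mem (Ioi_mem_nhds hx.1) (fun y hy => hderiv_eq y hy)
      exact ((hd2 x hx.1).congr_of_eventuallyEq this).differentiableAt.differentiableWithinAt
    · rw [interior_Ioc]
      intro x hx
      have hx0 : (0 : ℝ) < x := hx.1
      have heq : deriv (deriv g) x = g2 x := by
        have hev : deriv g =ᶠ[nhds x] g1 :=
          eventually_of_mem (Ioi_mem_nhds hx.1) (fun y hy => hderiv_eq y hy)
        rw [hev.deriv_eq]
        exact (hd2 x hx.1).deriv
      have : (0 : ℝ) ≤ g2 x := by
        -- (x/ϑ)^r ≤ η / (r (1-r))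
        have hxM : x ≤ M := le_of_lt hx.2
        have hxa : x / ϑ ≤ c := by
          rw [div_le_iff₀ hϑ]
          linarith [hxM, (by rw [hMdef]; ring : M = c * ϑ)]
        have hrle : (x / ϑ) ^ r ≤ η / (r * (1 - r)) := by
          calc (x / ϑ) ^ r ≤ c ^ r :=
                Real.rpow_le_rpow (by positivity) hxa hr0.le
            _ = η / (r * (1 - r)) := by
                rw [hc, ← Real.rpow_mul hbase.le, one_div, inv_mul_cancel₀ hr0.ne',
                  Real.rpow_one]
        have hy : (0 : ℝ) < x / ϑ := by positivity
        have hpow : (x / ϑ) ^ (r - 2) = (x / ϑ) ^ r / (x / ϑ) ^ 2 := by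
          rw [Real.rpow_sub hy]
          norm_num [Real.rpow_two]
        have hkey : r * (1 - r) * (x / ϑ) ^ r ≤ η := by
          have h := mul_le_mul_of_nonneg_left hrle (by positivity : (0 : ℝ) ≤ r * (1 - r))
          have he : r * (1 - r) * (η / (r * (1 - r))) = η := by field_simp
          linarith [he ▸ h]
        have hg2x : g2 x = (η - r * (1 - r) * (x / ϑ) ^ r) / x ^ 2 := by
          simp only [hg2, hpow]
          field_simp
          ring
        rw [hg2x]
        exact div_nonneg (by linarith) (by positivity)
      simp only [Function.iterate_succ, Function.iterate_zero, Function.comp_apply, id_eq]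
      rw [heq] at *
      exact this
  -- combine
  have hcomp : ConvexOn ℝ S (fun p : ℝ × ℝ => g p.2) := by
    have := hg_conv.comp_affineMap (LinearMap.snd ℝ ℝ ℝ).toAffineMap
    rw [hSpre]
    exact this
  have hsum := h1.add hcomp
  have hfun : (fun p : ℝ × ℝ =>
      p.1 ^ 2 / (2 * p.2) - η * Real.log (p.2 / ϑ) + (p.2 / ϑ) ^ r)
      = fun p : ℝ × ℝ => p.1 ^ 2 / (2 * p.2) + g p.2 := by
    funext p; simp only [hg]; ring
  rw [hfun]
  exact hsum
end

section
/- Let r < 0, β > 0, set η = 3/2 − rβ (which is positive), and let ϑ > 0. Then the single-component objective φ(u,θ) = u²/(2θ) + η log(θ/ϑ) + (θ/ϑ)^r is convex on the convex region {(u,θ) ∈ ℝ × ℝ : 0 < θ ≤ ϑ (η/(r(r−1)))^{1/r}}. -/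
open Real

/-- Convexity of the one-dimensional part `θ ↦ η log(θ/ϑ) + (θ/ϑ)^r` on `Ioc 0 c`. -/
lemma ias_aux_oneDim (r ϑ η : ℝ) (hr : r < 0) (hη : 0 < η) (hϑ : 0 < ϑ) :
    ConvexOn ℝ (Set.Ioc 0 (ϑ * (η / (r * (r - 1))) ^ (1 / r)))
      (fun θ : ℝ => η * Real.log (θ / ϑ) + (θ / ϑ) ^ r) := by
  set K : ℝ := r * (r - 1) with hK
  have hKpos : 0 < K := by nlinarith
  set c : ℝ := ϑ * (η / K) ^ (1 / r) with hc
  have hcpos : 0 < c := by positivity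
  apply convexOn_of_hasDerivWithinAt2_nonneg (f' := fun θ => η / θ + r * (θ / ϑ) ^ (r - 1) / ϑ)
    (f'' := fun θ => -η / θ ^ 2 + r * (r - 1) * (θ / ϑ) ^ (r - 2) / ϑ ^ 2)
    (convex_Ioc _ _)
  · -- continuity
    apply ContinuousOn.add
    · exact (continuousOn_const.mul ((Real.continuousOn_log.comp
        (continuousOn_id.div_const ϑ) (fun x hx => by
          simp only [Set.mem_compl_iff, Set.mem_singleton_iff, id]
          exact div_ne_zero (ne_of_gt hx.1) hϑ.ne'))))
    · intro x hx
      apply ContinuousWithinAt.rpow_const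
      · exact (continuousWithinAt_id.div_const ϑ)
      · left; exact div_ne_zero (ne_of_gt hx.1) hϑ.ne'
  · intro x hx
    rw [interior_Ioc] at hx
    have hx0 : 0 < x := hx.1
    have hq0 : (0:ℝ) < x / ϑ := div_pos hx0 hϑ
    have h1 : HasDerivAt (fun θ : ℝ => θ / ϑ) (1 / ϑ) x := by
      simpa using (hasDerivAt_id x).div_const ϑ
    have hlog : HasDerivAt (fun θ : ℝ => Real.log (θ / ϑ)) ((x / ϑ)⁻¹ * (1 / ϑ)) x :=
      by have := (Real.hasDerivAt_log hq0.ne').comp x h1; exact this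
    have hrp : HasDerivAt (fun θ : ℝ => (θ / ϑ) ^ r) (r * (x / ϑ) ^ (r - 1) * (1 / ϑ)) x :=
      by have := (Real.hasDerivAt_rpow_const (p := r) (Or.inl hq0.ne')).comp x h1; exact this
    have : HasDerivAt (fun θ : ℝ => η * Real.log (θ / ϑ) + (θ / ϑ) ^ r)
        (η * ((x / ϑ)⁻¹ * (1 / ϑ)) + r * (x / ϑ) ^ (r - 1) * (1 / ϑ)) x :=
      (hlog.const_mul η).add hrp
    have heq : η * ((x / ϑ)⁻¹ * (1 / ϑ)) + r * (x / ϑ) ^ (r - 1) * (1 / ϑ)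
        = η / x + r * (x / ϑ) ^ (r - 1) / ϑ := by
      field_simp
    rw [heq] at this
    exact this.hasDerivWithinAt
  · intro x hx
    rw [interior_Ioc] at hx
    have hx0 : 0 < x := hx.1
    have hq0 : (0:ℝ) < x / ϑ := div_pos hx0 hϑ
    have h1 : HasDerivAt (fun θ : ℝ => θ / ϑ) (1 / ϑ) x := by
      simpa using (hasDerivAt_id x).div_const ϑ
    have hinv : HasDerivAt (fun θ : ℝ => η / θ) (-η / x ^ 2) x := by
      simpa [div_eq_mul_inv, mul_comm, neg_div] using
        ((hasDerivAt_inv hx0.ne').const_mul η)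
    have hrp : HasDerivAt (fun θ : ℝ => (θ / ϑ) ^ (r - 1)) ((r - 1) * (x / ϑ) ^ (r - 1 - 1) * (1 / ϑ)) x :=
      by have := (Real.hasDerivAt_rpow_const (p := r - 1) (Or.inl hq0.ne')).comp x h1; exact this
    have : HasDerivAt (fun θ : ℝ => η / θ + r * (θ / ϑ) ^ (r - 1) / ϑ)
        (-η / x ^ 2 + r * ((r - 1) * (x / ϑ) ^ (r - 1 - 1) * (1 / ϑ)) / ϑ) x :=
      hinv.add ((hrp.const_mul r).div_const ϑ)
    have heq : -η / x ^ 2 + r * ((r - 1) * (x / ϑ) ^ (r - 1 - 1) * (1 / ϑ)) / ϑ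
        = -η / x ^ 2 + r * (r - 1) * (x / ϑ) ^ (r - 2) / ϑ ^ 2 := by
      have : r - 1 - 1 = r - 2 := by ring
      rw [this]; field_simp
    rw [heq] at this
    exact this.hasDerivWithinAt
  · intro x hx
    rw [interior_Ioc] at hx
    have hx0 : 0 < x := hx.1
    have hq0 : (0:ℝ) < x / ϑ := div_pos hx0 hϑ
    -- key bound : K * (x/ϑ)^r ≥ η
    have hle : x / ϑ ≤ (η / K) ^ (1 / r) := by
      rw [div_le_iff₀ hϑ] at *
      calc x ≤ c := hx.2.le
        _ = (η / K) ^ (1 / r) * ϑ := by rw [hc]; ring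
    have hkey : η ≤ K * (x / ϑ) ^ r := by
      have h2 : ((η / K) ^ (1 / r)) ^ r ≤ (x / ϑ) ^ r :=
        Real.rpow_le_rpow_of_nonpos hq0 hle hr.le
      have h3 : ((η / K) ^ (1 / r) : ℝ) ^ r = η / K := by
        rw [← Real.rpow_mul (by positivity : (0:ℝ) ≤ η / K),
          one_div_mul_cancel (ne_of_lt hr), Real.rpow_one]
      rw [h3] at h2
      calc η = K * (η / K) := by field_simp
        _ ≤ K * (x / ϑ) ^ r := by
          apply mul_le_mul_of_nonneg_left h2 (by nlinarith : (0:ℝ) ≤ K)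
    -- rewrite (x/ϑ)^(r-2) = (x/ϑ)^r / (x/ϑ)^2
    have hpow : (x / ϑ) ^ (r - 2) = (x / ϑ) ^ r / (x / ϑ) ^ (2:ℕ) := by
      rw [← Real.rpow_natCast (x / ϑ) 2, ← Real.rpow_sub hq0]
      norm_num
    have hdp : ((x / ϑ) : ℝ) ^ (2:ℕ) = x ^ 2 / ϑ ^ 2 := div_pow x ϑ 2
    have : r * (r - 1) * (x / ϑ) ^ (r - 2) / ϑ ^ 2 = K * (x / ϑ) ^ r / x ^ 2 := by
      rw [hpow, hdp, hK]
      field_simp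
    rw [this]
    have : -η / x ^ 2 + K * (x / ϑ) ^ r / x ^ 2 = (K * (x / ϑ) ^ r - η) / x ^ 2 := by ring
    rw [this]
    apply div_nonneg (by linarith) (by positivity)

/-- Convexity of `(u, θ) ↦ u² / (2θ)` on any subset of the upper half-plane. -/
lemma ias_aux_sq_div (s : Set (ℝ × ℝ)) (hconv : Convex ℝ s)
    (hpos : ∀ p ∈ s, 0 < p.2) :
    ConvexOn ℝ s (fun p : ℝ × ℝ => p.1 ^ 2 / (2 * p.2)) := by
  refine ⟨hconv, ?_⟩
  rintro ⟨x1, y1⟩ hp ⟨x2, y2⟩ hq a b ha hb hab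
  have hy1 : 0 < y1 := hpos _ hp
  have hy2 : 0 < y2 := hpos _ hq
  have hD : 0 < a * y1 + b * y2 := by
    rcases eq_or_lt_of_le ha with h | h
    · have hb1 : b = 1 := by linarith
      simp [← h, hb1, hy2]
    · nlinarith [mul_nonneg hb hy2.le]
  simp only [Prod.smul_fst, Prod.smul_snd, smul_eq_mul, Prod.fst_add, Prod.snd_add,
    Prod.mk_add_mk]
  rw [← mul_div_assoc, ← mul_div_assoc,
    div_add_div _ _ (by positivity : (2:ℝ) * y1 ≠ 0) (by positivity : (2:ℝ) * y2 ≠ 0),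
    div_le_div_iff₀ (by positivity) (by positivity)]
  nlinarith [mul_nonneg (mul_nonneg ha hb) (sq_nonneg (x1 * y2 - x2 * y1)),
    mul_pos hy1 hy2, sq_nonneg (a * x1 + b * x2)]

/-- For `r < 0`, `β > 0` and `η = 3/2 - r * β` (which is positive), the
single-component IAS objective `φ(u, θ) = u²/(2θ) + η log(θ/ϑ) + (θ/ϑ)^r` is convex on
the region `{(u, θ) : 0 < θ ≤ ϑ (η/(r(r-1)))^(1/r)}`. -/
theorem ias_single_component_convexOn_of_neg (r β ϑ η : ℝ) (hr : r < 0) (hβ : 0 < β)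
    (hη : η = 3 / 2 - r * β) (hϑ : 0 < ϑ) :
    0 < η ∧
    ConvexOn ℝ {p : ℝ × ℝ | 0 < p.2 ∧ p.2 ≤ ϑ * (η / (r * (r - 1))) ^ (1 / r)}
      (fun p : ℝ × ℝ =>
        p.1 ^ 2 / (2 * p.2) + η * Real.log (p.2 / ϑ) + (p.2 / ϑ) ^ r) := by
  have hηpos : 0 < η := by nlinarith
  refine ⟨hηpos, ?_⟩
  set c : ℝ := ϑ * (η / (r * (r - 1))) ^ (1 / r) with hc
  have h1 : ConvexOn ℝ (Set.Ioc 0 c) (fun θ : ℝ => η * Real.log (θ / ϑ) + (θ / ϑ) ^ r) :=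
    ias_aux_oneDim r ϑ η hr hηpos hϑ
  have hSeq : {p : ℝ × ℝ | 0 < p.2 ∧ p.2 ≤ c} = (LinearMap.snd ℝ ℝ ℝ) ⁻¹' (Set.Ioc 0 c) := by
    ext p; simp [Set.mem_Ioc]
  have h2 : ConvexOn ℝ {p : ℝ × ℝ | 0 < p.2 ∧ p.2 ≤ c}
      (fun p : ℝ × ℝ => η * Real.log (p.2 / ϑ) + (p.2 / ϑ) ^ r) := by
    rw [hSeq]
    exact h1.comp_linearMap (LinearMap.snd ℝ ℝ ℝ)
  have h3 : ConvexOn ℝ {p : ℝ × ℝ | 0 < p.2 ∧ p.2 ≤ c}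
      (fun p : ℝ × ℝ => p.1 ^ 2 / (2 * p.2)) :=
    ias_aux_sq_div _ h2.1 (fun p hp => hp.1)
  have hfun : (fun p : ℝ × ℝ => p.1 ^ 2 / (2 * p.2) + η * Real.log (p.2 / ϑ) + (p.2 / ϑ) ^ r)
      = ((fun p : ℝ × ℝ => p.1 ^ 2 / (2 * p.2))
        + fun p : ℝ × ℝ => η * Real.log (p.2 / ϑ) + (p.2 / ϑ) ^ r) := by
    funext p
    simp only [Pi.add_apply]
    ring
  rw [hfun]
  exact h3.add h2
end

section
/- Let r > 0 and η > 0, and let φ : [0,∞) → (0,∞) be differentiable and satisfy the stationarity identity −z²/(2φ(z)²) − η/φ(z) + r φ(z)^{r−1} = 0 for all z ≥ 0. Then φ(0) = (η/r)^{1/r} and for every z ≥ 0, φ'(z) = 2 z φ(z) / (2 r² φ(z)^{r+1} + z²). -/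
open Real

/-- If `φ : [0, ∞) → (0, ∞)` is differentiable and satisfies the stationarity identity
`-z²/(2φ(z)²) - η/φ(z) + r φ(z)^(r-1) = 0` for all `z ≥ 0`, then `φ(0) = (η/r)^(1/r)`
and `φ'(z) = 2 z φ(z) / (2 r² φ(z)^(r+1) + z²)` for every `z ≥ 0`. -/
theorem ias_phi_ode (r η : ℝ) (hr : 0 < r) (hη : 0 < η) (φ : ℝ → ℝ)
    (hφpos : ∀ z, 0 ≤ z → 0 < φ z)
    (hφdiff : DifferentiableOn ℝ φ (Set.Ici 0))
    (hstat : ∀ z, 0 ≤ z →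
      -(z ^ 2) / (2 * (φ z) ^ 2) - η / φ z + r * (φ z) ^ (r - 1) = 0) :
    φ 0 = (η / r) ^ (1 / r) ∧
    ∀ z, 0 ≤ z →
      derivWithin φ (Set.Ici 0) z =
        2 * z * φ z / (2 * r ^ 2 * (φ z) ^ (r + 1) + z ^ 2) := by
  -- polynomial form of the stationarity identity
  have key : ∀ z, 0 ≤ z → 2 * r * (φ z) ^ (r + 1) = z ^ 2 + 2 * η * φ z := by
    intro z hz
    have hp := hφpos z hz
    have h := hstat z hz
    have hrw : (φ z) ^ (r - 1) * (φ z) ^ 2 = (φ z) ^ (r + 1) := by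
      rw [← Real.rpow_natCast (φ z) 2, ← Real.rpow_add hp]
      congr 1
      push_cast; ring
    have hp2 : (φ z) ^ 2 ≠ 0 := by positivity
    field_simp at h
    have goal' : (2 * r * (φ z) ^ (r + 1)) * φ z = (z ^ 2 + 2 * η * φ z) * φ z := by
      linear_combination φ z * h - 2 * r * φ z * hrw
    exact mul_right_cancel₀ hp.ne' goal'
  have hmul : ∀ z, 0 ≤ z → (φ z) ^ r * φ z = (φ z) ^ (r + 1) := by
    intro z hz
    have hp := hφpos z hz
    have h := Real.rpow_add hp r 1
    rw [Real.rpow_one] at h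
    exact h.symm
  constructor
  · have hp := hφpos 0 le_rfl
    have h := key 0 le_rfl
    have h2 : (φ 0) ^ r * φ 0 = (φ 0) ^ (r + 1) := hmul 0 le_rfl
    have hthis : r * ((φ 0) ^ r * φ 0) = η * φ 0 := by
      linear_combination h / 2 + r * h2
    have h3 : (φ 0) ^ r = η / r := by
      rw [eq_div_iff hr.ne']
      exact mul_right_cancel₀ hp.ne' (by linear_combination hthis)
    have h4 : (η / r) ^ (1 / r) = φ 0 := by
      rw [← h3, ← Real.rpow_mul hp.le, mul_one_div, div_self hr.ne', Real.rpow_one]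
    exact h4.symm
  · intro z hz
    have hp := hφpos z hz
    have hU : UniqueDiffWithinAt ℝ (Set.Ici (0:ℝ)) z := uniqueDiffOn_Ici 0 z hz
    set d := derivWithin φ (Set.Ici 0) z with hd
    have hder : HasDerivWithinAt φ d (Set.Ici 0) z := (hφdiff z hz).hasDerivWithinAt
    have hrp : HasDerivWithinAt (fun y => (φ y) ^ (r + 1))
        (d * (r + 1) * (φ z) ^ (r + 1 - 1)) (Set.Ici 0) z :=
      hder.rpow_const (p := r + 1) (Or.inl hp.ne')
    have hsq : HasDerivWithinAt (fun y : ℝ => y ^ 2) (2 * z) (Set.Ici 0) z := by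
      simpa using (hasDerivAt_pow 2 z).hasDerivWithinAt
    have h1 : HasDerivWithinAt (fun y => 2 * r * (φ y) ^ (r + 1) - 2 * η * φ y - y ^ 2)
        (2 * r * (d * (r + 1) * (φ z) ^ (r + 1 - 1)) - 2 * η * d - 2 * z) (Set.Ici 0) z :=
      ((hrp.const_mul (2*r)).sub (hder.const_mul (2*η))).sub hsq
    have h0 : HasDerivWithinAt (fun y => 2 * r * (φ y) ^ (r + 1) - 2 * η * φ y - y ^ 2)
        0 (Set.Ici 0) z := by
      have hc : HasDerivWithinAt (fun _ : ℝ => (0:ℝ)) 0 (Set.Ici 0) z :=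
        (hasDerivAt_const z (0:ℝ)).hasDerivWithinAt
      apply hc.congr
      · intro y hy
        have := key y hy
        linarith
      · have := key z hz
        linarith
    have heq : 2 * r * (d * (r + 1) * (φ z) ^ (r + 1 - 1)) - 2 * η * d - 2 * z = 0 :=
      (h1.derivWithin hU).symm.trans (h0.derivWithin hU)
    have hre : r + 1 - 1 = r := by ring
    rw [hre] at heq
    have hm := hmul z hz
    have hk := key z hz
    have hpow : 0 < (φ z) ^ (r + 1) := Real.rpow_pos_of_pos hp _
    have hden : 0 < 2 * r ^ 2 * (φ z) ^ (r + 1) + z ^ 2 := by positivity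
    rw [eq_div_iff hden.ne']
    linear_combination φ z * heq - 2 * r * (r + 1) * d * hm - d * hk
end
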